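/- arXiv:math/0511176 — 2 statements merged into one kernel-verified Lean document; each statement's English description precedes it below -/
import Mathlib

section
/- Let F be a finite extension of ℚ₂ with normalized valuation v_F and absolute ramification index e_F = v_F(2). For u = 1 + β a unit of F with 0 < v_F(β) < 2e_F and v_F(β) odd, the quadratic defect of u in F equals v_F(β), i.e., max{v_F(k²u − 1) : k ∈ F} = v_F(β). -/
/-- A discrete (normalized, rank-one) valuation on a field `F`, written additively with
values in `WithTop ℤ`: `v 0 = ⊤`, `v` is multiplicative, satisfies the ultrametric
inequality, and takes the value `1` (at a uniformizer). -/
def DiscreteVal (F : Type*) [Field F] (v : F → WithTop ℤ) : Prop :=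
  v 0 = ⊤ ∧ (∀ x : F, v x = ⊤ → x = 0) ∧ (∀ x y : F, v (x * y) = v x + v y) ∧
    (∀ x y : F, min (v x) (v y) ≤ v (x + y)) ∧ (∃ π : F, v π = 1)

/-- `d` is the quadratic defect of `κ` in `F`: the maximum of `v (k² κ - 1)` over `k ∈ F`. -/
def HasQuadDefect {F : Type*} [Field F] (v : F → WithTop ℤ) (κ : F) (d : WithTop ℤ) : Prop :=
  IsGreatest {n : WithTop ℤ | ∃ k : F, v (k ^ 2 * κ - 1) = n} d

/-- For `F` a finite extension of `ℚ₂` with normalized valuation `v` and absolute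
ramification `e_F = v 2`, and `u = 1 + β` a one-unit with `0 < v β < 2 e_F` odd,
the quadratic defect of `u` in `F` equals `v β`. -/
theorem quad_defect_of_one_unit
    (F : Type*) [Field F] [Algebra ℚ_[2] F] [FiniteDimensional ℚ_[2] F]
    (v : F → WithTop ℤ) (hv : DiscreteVal F v)
    (eF : ℤ) (he : v 2 = (eF : WithTop ℤ))
    (β : F) (b : ℤ) (hβ : v β = (b : WithTop ℤ))
    (hb0 : 0 < b) (hb2 : b < 2 * eF) (hbodd : Odd b) :
    HasQuadDefect v (1 + β) (b : WithTop ℤ) := by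
  obtain ⟨h0, htop, hmul, hadd, -⟩ := hv
  -- nonzero elements have integer valuation
  have hvne : ∀ x : F, x ≠ 0 → ∃ c : ℤ, v x = (c : WithTop ℤ) := by
    intro x hx
    rcases eq_or_ne (v x) ⊤ with h | h
    · exact absurd (htop x h) hx
    · exact ⟨(v x).untop h, (WithTop.coe_untop _ h).symm⟩
  have hv1 : v 1 = 0 := by
    obtain ⟨c, hc⟩ := hvne 1 one_ne_zero
    have h1 := hmul 1 1
    rw [one_mul, hc] at h1
    have h2 : c = c + c := by exact_mod_cast h1
    have h3 : c = 0 := by omega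
    rw [hc, h3, WithTop.coe_zero]
  have hvneg : ∀ x : F, v (-x) = v x := by
    have hm1 : v (-1 : F) = 0 := by
      obtain ⟨c, hc⟩ := hvne (-1) (by norm_num)
      have h1 := hmul (-1) (-1)
      rw [neg_mul_neg, one_mul, hv1, hc] at h1
      have h2 : (0 : ℤ) = c + c := by exact_mod_cast h1
      have h3 : c = 0 := by omega
      rw [hc, h3, WithTop.coe_zero]
    intro x
    have h1 := hmul (-1) x
    rw [neg_one_mul, hm1, zero_add] at h1
    exact h1
  -- if valuations differ, valuation of sum is the min
  have key : ∀ x y : F, v x < v y → v (x + y) = v x := by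
    intro x y h
    have h1 := hadd x y
    have h2 : min (v (x + y)) (v (-y)) ≤ v x := by
      have h3 := hadd (x + y) (-y)
      rwa [add_neg_cancel_right] at h3
    rw [hvneg] at h2
    refine le_antisymm ?_ ?_
    · by_contra hlt
      push_neg at hlt
      exact absurd h2 (not_le.mpr (lt_min hlt h))
    · rw [min_eq_left h.le] at h1
      exact h1
  have hne : ∀ x y : F, v x ≠ v y → v (x + y) = min (v x) (v y) := by
    intro x y hxy
    rcases lt_or_gt_of_ne hxy with h | h
    · rw [min_eq_left h.le]; exact key x y h
    · rw [min_eq_right h.le, add_comm]; exact key y x h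
  -- v (1 + β) = 0
  have hvu : v (1 + β) = 0 := by
    have h1 : v (1 : F) ≠ v β := by
      rw [hv1, hβ]
      exact_mod_cast hb0.ne
    rw [hne 1 β h1, hv1, hβ, min_eq_left (by exact_mod_cast hb0.le)]
  constructor
  · exact ⟨1, by rw [one_pow, one_mul, add_sub_cancel_left, hβ]⟩
  · rintro n ⟨k, rfl⟩
    by_cases hk : k = 0
    · subst hk
      have h1 : (0 : F) ^ 2 * (1 + β) - 1 = -1 := by ring
      rw [h1, hvneg, hv1]
      exact_mod_cast hb0.le
    · obtain ⟨c, hc⟩ := hvne k hk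
      have hk2 : v (k ^ 2) = ((2 * c : ℤ) : WithTop ℤ) := by
        rw [sq, hmul, hc, ← WithTop.coe_add]
        congr 1
        ring
      by_cases hc0 : c = 0
      · -- k is a unit
        subst hc0
        have hk2' : v (k ^ 2) = 0 := by simpa using hk2
        have hkb : v (k ^ 2 * β) = (b : WithTop ℤ) := by
          rw [hmul, hk2', hβ, zero_add]
        have hexp : k ^ 2 * (1 + β) - 1 = (k ^ 2 - 1) + k ^ 2 * β := by ring
        rw [hexp]
        have hne' : v (k ^ 2 - 1) ≠ v (k ^ 2 * β) := by
          rw [hkb]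
          intro hcontra
          -- then v (k² - 1) = b; factor k² - 1 = (k-1)(k+1)
          have hk2ne : k ^ 2 - 1 ≠ 0 := by
            intro h
            rw [h, h0] at hcontra
            exact (WithTop.top_ne_coe) hcontra
          have hfac : k ^ 2 - 1 = (k - 1) * (k + 1) := by ring
          have hkm : k - 1 ≠ 0 := by
            intro h; apply hk2ne; rw [hfac, h, zero_mul]
          have hkp : k + 1 ≠ 0 := by
            intro h; apply hk2ne; rw [hfac, h, mul_zero]
          obtain ⟨a₁, ha1⟩ := hvne (k - 1) hkm
          obtain ⟨a₂, ha2⟩ := hvne (k + 1) hkp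
          have hprod : v ((k - 1) * (k + 1)) = v (k - 1) + v (k + 1) := hmul _ _
          rw [← hfac, hcontra, ha1, ha2, ← WithTop.coe_add] at hprod
          have hsum : b = a₁ + a₂ := by exact_mod_cast hprod
          rcases eq_or_ne a₁ a₂ with heq | hneq
          · -- b = 2 a₁ contradicts b odd
            obtain ⟨m, hm⟩ := hbodd
            omega
          · -- v 2 = min a₂ a₁, so eF = min; but then b = a₁ + a₂ ≥ 2 eF + 1
            have h2eq : (k + 1) + -(k - 1) = 2 := by ring
            have hne2 : v (k + 1) ≠ v (-(k - 1)) := by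
              rw [hvneg, ha1, ha2]
              exact_mod_cast hneq.symm
            have h3 := hne (k + 1) (-(k - 1)) hne2
            rw [h2eq, hvneg, ha1, ha2, he] at h3
            have h4 : eF = min a₂ a₁ := by exact_mod_cast h3
            rcases le_total a₂ a₁ with hle | hle
            · rw [min_eq_left hle] at h4; omega
            · rw [min_eq_right hle] at h4; omega
        rw [hne _ _ hne', hkb]
        exact min_le_right _ _
      · -- v k = c ≠ 0
        have hvm : v (k ^ 2 * (1 + β)) = ((2 * c : ℤ) : WithTop ℤ) := by
          rw [hmul, hk2, hvu, add_zero]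
        have hsplit : v (k ^ 2 * (1 + β) - 1) = min (v (k ^ 2 * (1 + β))) (v (-1 : F)) := by
          rw [sub_eq_add_neg]
          apply hne
          rw [hvm, hvneg, hv1]
          exact_mod_cast (by omega : (2 * c : ℤ) ≠ 0)
        rw [hsplit, hvm, hvneg, hv1]
        calc min ((2 * c : ℤ) : WithTop ℤ) 0 ≤ 0 := min_le_right _ _
          _ ≤ (b : WithTop ℤ) := by exact_mod_cast hb0.le
end

section
/- In 𝔽_q[C₂ × C₂] with q = 2^f, for x, y in the Jacobson radical J = (σ−1, γ−1) and a ∈ 𝔽_q, one has ((1+x)(1+y))^[a] · (1+x)^[−a] · (1+y)^[−a] = 1 + (a² + a)xy, where (1+z)^[a] := 1 + az. -/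
section Aux

variable (f : ℕ)

private lemma gf_two_eq_zero :
    (2 : AddMonoidAlgebra (GaloisField 2 f) (ZMod 2 × ZMod 2)) = 0 := by
  have h2 : (2 : GaloisField 2 f) = 0 := by
    exact_mod_cast CharP.cast_eq_zero (GaloisField 2 f) 2
  calc (2 : AddMonoidAlgebra (GaloisField 2 f) (ZMod 2 × ZMod 2))
      = algebraMap (GaloisField 2 f) _ 2 := by rw [map_ofNat]
    _ = 0 := by rw [h2, map_zero]

private lemma gf_sq_zero
    (g : ZMod 2 × ZMod 2) (hg : g + g = 0) :
    (AddMonoidAlgebra.of' (GaloisField 2 f) (ZMod 2 × ZMod 2) g - 1) *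
      (AddMonoidAlgebra.of' (GaloisField 2 f) (ZMod 2 × ZMod 2) g - 1) = 0 := by
  have h1 : AddMonoidAlgebra.of' (GaloisField 2 f) (ZMod 2 × ZMod 2) g *
      AddMonoidAlgebra.of' (GaloisField 2 f) (ZMod 2 × ZMod 2) g = 1 := by
    rw [AddMonoidAlgebra.of'_apply, AddMonoidAlgebra.single_mul_single, hg, mul_one,
      ← AddMonoidAlgebra.one_def]
  linear_combination h1 +
    (1 - AddMonoidAlgebra.of' (GaloisField 2 f) (ZMod 2 × ZMod 2) g) * gf_two_eq_zero f

private lemma gf_mem_sq_zero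
    (z : AddMonoidAlgebra (GaloisField 2 f) (ZMod 2 × ZMod 2))
    (hz : z ∈ Ideal.span ({AddMonoidAlgebra.of' (GaloisField 2 f) (ZMod 2 × ZMod 2) (1, 0) - 1,
        AddMonoidAlgebra.of' (GaloisField 2 f) (ZMod 2 × ZMod 2) (0, 1) - 1} :
          Set (AddMonoidAlgebra (GaloisField 2 f) (ZMod 2 × ZMod 2)))) :
    z * z = 0 := by
  rw [Ideal.mem_span_pair] at hz
  obtain ⟨p, q, hpq⟩ := hz
  have hu2 := gf_sq_zero f (1, 0) (by decide)
  have hv2 := gf_sq_zero f (0, 1) (by decide)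
  calc z * z = (p * (AddMonoidAlgebra.of' (GaloisField 2 f) (ZMod 2 × ZMod 2) (1, 0) - 1) +
        q * (AddMonoidAlgebra.of' (GaloisField 2 f) (ZMod 2 × ZMod 2) (0, 1) - 1)) *
        (p * (AddMonoidAlgebra.of' (GaloisField 2 f) (ZMod 2 × ZMod 2) (1, 0) - 1) +
        q * (AddMonoidAlgebra.of' (GaloisField 2 f) (ZMod 2 × ZMod 2) (0, 1) - 1)) := by rw [hpq]
    _ = p * p * ((AddMonoidAlgebra.of' (GaloisField 2 f) (ZMod 2 × ZMod 2) (1, 0) - 1) *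
          (AddMonoidAlgebra.of' (GaloisField 2 f) (ZMod 2 × ZMod 2) (1, 0) - 1)) +
        q * q * ((AddMonoidAlgebra.of' (GaloisField 2 f) (ZMod 2 × ZMod 2) (0, 1) - 1) *
          (AddMonoidAlgebra.of' (GaloisField 2 f) (ZMod 2 × ZMod 2) (0, 1) - 1)) +
        (2 : AddMonoidAlgebra (GaloisField 2 f) (ZMod 2 × ZMod 2)) *
          (p * q * ((AddMonoidAlgebra.of' (GaloisField 2 f) (ZMod 2 × ZMod 2) (1, 0) - 1) *
            (AddMonoidAlgebra.of' (GaloisField 2 f) (ZMod 2 × ZMod 2) (0, 1) - 1))) := by ring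
    _ = 0 := by rw [hu2, hv2, gf_two_eq_zero f]; ring

end Aux

/-- In `𝔽_q[C₂ × C₂]` with `q = 2^f`, for `x, y` in the Jacobson radical
`J = (σ - 1, γ - 1)` and `a ∈ 𝔽_q`, one has
`((1+x)(1+y))^[a] · (1+x)^[-a] · (1+y)^[-a] = 1 + (a² + a)·x·y`,
where `(1+z)^[a] := 1 + a·z` (note `(1+x)(1+y) = 1 + (x + y + x·y)`). -/
theorem scalar_action_defect_formula (f : ℕ) (hf : 0 < f) :
    ∀ (x y : AddMonoidAlgebra (GaloisField 2 f) (ZMod 2 × ZMod 2))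
      (a : GaloisField 2 f),
      x ∈ Ideal.span ({AddMonoidAlgebra.of' (GaloisField 2 f) (ZMod 2 × ZMod 2) (1, 0) - 1,
        AddMonoidAlgebra.of' (GaloisField 2 f) (ZMod 2 × ZMod 2) (0, 1) - 1} :
          Set (AddMonoidAlgebra (GaloisField 2 f) (ZMod 2 × ZMod 2))) →
      y ∈ Ideal.span ({AddMonoidAlgebra.of' (GaloisField 2 f) (ZMod 2 × ZMod 2) (1, 0) - 1,
        AddMonoidAlgebra.of' (GaloisField 2 f) (ZMod 2 × ZMod 2) (0, 1) - 1} :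
          Set (AddMonoidAlgebra (GaloisField 2 f) (ZMod 2 × ZMod 2))) →
      (1 + a • (x + y + x * y)) * (1 + (-a) • x) * (1 + (-a) • y) =
        1 + (a ^ 2 + a) • (x * y) := by
  intro x y a hx hy
  have hx2 : x * x = 0 := gf_mem_sq_zero f x hx
  have hy2 : y * y = 0 := gf_mem_sq_zero f y hy
  have h2R := gf_two_eq_zero f
  simp only [Algebra.smul_def, map_neg, map_add, map_pow]
  set b : AddMonoidAlgebra (GaloisField 2 f) (ZMod 2 × ZMod 2) :=
    algebraMap (GaloisField 2 f) _ a with hb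
  linear_combination (-(b ^ 2) * (x * y)) * h2R +
    (-(b ^ 2) * (1 + y) + b ^ 3 * (y + y * y)) * hx2 +
    (-(b ^ 2) * (1 + x) + b ^ 3 * x) * hy2
end
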